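/- arXiv:2107.11290 — 5 statements merged into one kernel-verified Lean document; each statement's English description precedes it below -/
import Mathlib

section
/- A torsion-free abelian group G is co-Hopfian if and only if G is divisible of finite rank. -/
open TensorProduct

def IsCoHopfian (G : Type*) [AddCommGroup G] : Prop :=
  ∀ f : G →+ G, Function.Injective f → Function.Surjective f

section Aux

variable {G : Type*} [AddCommGroup G]

lemma aux_isLocalizedModule (G : Type*) [AddCommGroup G] :
    IsLocalizedModule (nonZeroDivisors ℤ) (TensorProduct.mk ℤ ℚ G 1) :=
  (isLocalizedModule_iff_isBaseChange (nonZeroDivisors ℤ) ℚ _).mpr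
    (TensorProduct.isBaseChange ℤ G ℚ)

lemma aux_inj (htf : ∀ g : G, ∀ n : ℕ, 0 < n → n • g = 0 → g = 0) :
    Function.Injective (TensorProduct.mk ℤ ℚ G 1) := by
  have hloc := aux_isLocalizedModule G
  rw [injective_iff_map_eq_zero]
  intro g hg
  obtain ⟨s, hs⟩ := (IsLocalizedModule.eq_zero_iff (nonZeroDivisors ℤ) _).mp hg
  have hs0 : (s : ℤ) ≠ 0 := nonZeroDivisors.coe_ne_zero s
  have h2 : ((s : ℤ).natAbs : ℤ) • g = 0 := by
    rcases Int.natAbs_eq (s : ℤ) with h | h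
    · rw [← h]; exact hs
    · have : (-((s : ℤ).natAbs : ℤ)) • g = 0 := by rw [← h]; exact hs
      rw [neg_smul, neg_eq_zero] at this; exact this
  rw [natCast_zsmul] at h2
  exact htf g (s : ℤ).natAbs (Int.natAbs_pos.mpr hs0) h2

lemma aux_surj (hdiv : ∀ g : G, ∀ n : ℕ, 0 < n → ∃ h : G, n • h = g) :
    Function.Surjective (TensorProduct.mk ℤ ℚ G 1) := by
  intro x
  induction x using TensorProduct.induction_on with
  | zero => exact ⟨0, by simp⟩
  | tmul q g =>
    obtain ⟨h, hh⟩ := hdiv g q.den q.pos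
    refine ⟨q.num • h, ?_⟩
    have hh' : ((q.den : ℤ)) • h = g := by rw [natCast_zsmul]; exact hh
    calc (TensorProduct.mk ℤ ℚ G 1) (q.num • h)
        = (1 : ℚ) ⊗ₜ[ℤ] (q.num • h) := rfl
      _ = (q.num • (1 : ℚ)) ⊗ₜ[ℤ] h := (TensorProduct.smul_tmul q.num (1:ℚ) h).symm
      _ = ((q.num : ℚ)) ⊗ₜ[ℤ] h := by rw [zsmul_eq_mul, mul_one]
      _ = (q * q.den) ⊗ₜ[ℤ] h := by rw [Rat.mul_den_eq_num]
      _ = ((q.den : ℤ) • q) ⊗ₜ[ℤ] h := by push_cast [zsmul_eq_mul]; ring_nf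
      _ = q ⊗ₜ[ℤ] ((q.den : ℤ) • h) := (TensorProduct.smul_tmul _ q h)
      _ = q ⊗ₜ[ℤ] g := by rw [hh']
  | add x y hx hy =>
    obtain ⟨a, ha⟩ := hx
    obtain ⟨b, hb⟩ := hy
    exact ⟨a + b, by rw [map_add, ha, hb]⟩

end Aux

theorem stmt_3 (G : Type*) [AddCommGroup G]
    (htf : ∀ g : G, ∀ n : ℕ, 0 < n → n • g = 0 → g = 0) :
    IsCoHopfian G ↔
      ((∀ g : G, ∀ n : ℕ, 0 < n → ∃ h : G, n • h = g) ∧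
        Module.rank ℚ (ℚ ⊗[ℤ] G) < Cardinal.aleph0) := by
  classical
  have hinj := aux_inj htf
  constructor
  · intro hch
    have hdiv : ∀ g : G, ∀ n : ℕ, 0 < n → ∃ h : G, n • h = g := by
      intro g n hn
      have hfinj : Function.Injective (fun x : G => n • x) := by
        intro a b hab
        have : n • (a - b) = 0 := by
          simp only [smul_sub]
          rw [sub_eq_zero]; exact hab
        exact sub_eq_zero.mp (htf (a - b) n hn this)
      obtain ⟨h, hh⟩ := hch (AddMonoidHom.mk' (fun x => n • x) (fun a b => smul_add n a b)) hfinj g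
      exact ⟨h, hh⟩
    refine ⟨hdiv, ?_⟩
    by_contra hc
    push_neg at hc
    have hsurj := aux_surj hdiv
    set e := AddEquiv.ofBijective (TensorProduct.mk ℤ ℚ G 1).toAddMonoidHom ⟨hinj, hsurj⟩ with he
    -- build injective non-surjective linear endomorphism of V := ℚ ⊗[ℤ] G
    have hrk : Module.rank ℚ ((ℚ ⊗[ℤ] G) × ℚ) = Module.rank ℚ (ℚ ⊗[ℤ] G) := by
      rw [rank_prod, Module.rank_self]
      simp only [Cardinal.lift_one, Cardinal.lift_id', Cardinal.lift_umax]
      exact Cardinal.add_one_eq hc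
    obtain ⟨φ⟩ := LinearEquiv.nonempty_equiv_iff_rank_eq.mpr hrk
    set Lmap : (ℚ ⊗[ℤ] G) →ₗ[ℚ] (ℚ ⊗[ℤ] G) := φ.toLinearMap ∘ₗ LinearMap.inl ℚ _ ℚ with hL
    have hLinj : Function.Injective Lmap := φ.injective.comp LinearMap.inl_injective
    have hLnsurj : ¬ Function.Surjective Lmap := by
      intro hs
      obtain ⟨v, hv⟩ := hs (φ (0, 1))
      have : (LinearMap.inl ℚ (ℚ ⊗[ℤ] G) ℚ) v = (0, 1) := φ.injective hv
      have := congrArg Prod.snd this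
      simp at this
    -- transfer to G
    set k : G →+ G :=
      (e.symm.toAddMonoidHom.comp (LinearMap.toAddMonoidHom Lmap)).comp e.toAddMonoidHom with hk
    have hkinj : Function.Injective k := by
      simp only [hk, AddMonoidHom.coe_comp, AddEquiv.coe_toAddMonoidHom, LinearMap.toAddMonoidHom_coe]
      exact e.symm.injective.comp (hLinj.comp e.injective)
    have hksurj := hch k hkinj
    apply hLnsurj
    intro v
    obtain ⟨g, hg⟩ := hksurj (e.symm v)
    refine ⟨e g, ?_⟩
    have := congrArg e hg
    simp only [hk, AddMonoidHom.coe_comp, AddEquiv.coe_toAddMonoidHom,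
      LinearMap.toAddMonoidHom_coe, Function.comp_apply] at this
    rwa [AddEquiv.apply_symm_apply, AddEquiv.apply_symm_apply] at this
  · rintro ⟨hdiv, hrank⟩
    have hsurj := aux_surj hdiv
    set e := AddEquiv.ofBijective (TensorProduct.mk ℤ ℚ G 1).toAddMonoidHom ⟨hinj, hsurj⟩ with he
    haveI : Module.Finite ℚ (ℚ ⊗[ℤ] G) := Module.rank_lt_aleph0_iff.mp hrank
    haveI : FiniteDimensional ℚ (ℚ ⊗[ℤ] G) := ‹_›
    intro f hf
    set F : (ℚ ⊗[ℤ] G) →+ (ℚ ⊗[ℤ] G) :=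
      (e.toAddMonoidHom.comp f).comp e.symm.toAddMonoidHom with hF
    have hFinj : Function.Injective F := by
      simp only [hF, AddMonoidHom.coe_comp, AddEquiv.coe_toAddMonoidHom]
      exact e.injective.comp (hf.comp e.symm.injective)
    have hFlin := F.toRatLinearMap
    have hFsurj : Function.Surjective F := by
      have : Function.Injective F.toRatLinearMap := by
        rwa [AddMonoidHom.coe_toRatLinearMap]
      have := LinearMap.surjective_of_injective this
      rwa [AddMonoidHom.coe_toRatLinearMap] at this
    intro g
    obtain ⟨v, hv⟩ := hFsurj (e g)
    exact ⟨e.symm v, by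
      have := congrArg e.symm hv
      simpa [hF] using this⟩
end

section
/- Let G be an abelian group and p a prime. If the p-torsion subgroup Tor_p(G) has bounded exponent and the quotient G/Tor_p(G) is not p-divisible, then G is not co-Hopfian. -/
open Pointwise

namespace Submodule

variable {R M : Type*} [CommRing R] [IsBezout R] [AddCommGroup M] [Module R M] {p : R}

theorem exists_le_disjoint_le_sup_of_disjoint_smul (hp : Irreducible p) {S B : Submodule R M}
    (hSB : Disjoint S (p • B)) : ∃ C ≤ B, Disjoint S C ∧ B ≤ S ⊔ C := by
  obtain ⟨C, -, hCmax⟩ := zorn_le_nonempty₀ {C | C ≤ B ∧ Disjoint S C ∧ p • B ≤ C}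
    (fun c hc hchain y hy => ⟨sSup c,
      ⟨sSup_le fun z hz => (hc hz).1,
        disjoint_def.2 fun x hxS hx => by
          obtain ⟨z, hz, hxz⟩ := (mem_sSup_of_directed ⟨y, hy⟩ hchain.directedOn).1 hx
          exact disjoint_def.1 (hc hz).2.1 x hxS hxz,
        (hc hy).2.2.trans (le_sSup hy)⟩,
      fun z hz => le_sSup hz⟩)
    (p • B) ⟨smul_le_self_of_tower p B, hSB, le_rfl⟩
  obtain ⟨hCB, hSC, hpBC⟩ := hCmax.prop
  refine ⟨C, hCB, hSC, fun x hx => ?_⟩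
  by_contra hxSC
  have hx' : ¬ Disjoint S (C ⊔ R ∙ x) := fun hdisj =>
    hxSC <| mem_sup_right <| hCmax.le_of_ge
      ⟨sup_le hCB ((span_singleton_le_iff_mem x B).2 hx), hdisj, hpBC.trans le_sup_left⟩
      le_sup_left (mem_sup_right (mem_span_singleton_self x))
  simp only [disjoint_def, not_forall] at hx'
  obtain ⟨y, hyS, hy, hy0⟩ := hx'
  obtain ⟨c, hc, w, hw, rfl⟩ := mem_sup.1 hy
  obtain ⟨a, rfl⟩ := mem_span_singleton.1 hw
  have hpx : p • x ∈ C := hpBC (smul_mem_pointwise_smul x p B hx)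
  rcases dvd_or_isCoprime p a hp with ⟨b, rfl⟩ | ⟨u, v, huv⟩
  · rw [mul_comm, mul_smul] at hyS hy0
    exact hy0 (disjoint_def.1 hSC _ hyS (C.add_mem hc (C.smul_mem b hpx)))
  · have hax : a • x ∈ S ⊔ C := by
      rw [show a • x = (c + a • x) - c by abel]
      exact sub_mem (mem_sup_left hyS) (mem_sup_right hc)
    refine hxSC ?_
    rw [← one_smul R x, ← huv, add_smul, mul_smul, mul_smul]
    exact add_mem (smul_mem _ u (mem_sup_right hpx)) (smul_mem _ v hax)

theorem exists_compl_of_compl_smul (hp : Irreducible p) {S N D : Submodule R M} (hSN : S ≤ N)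
    (hpure : S ⊓ p • N ≤ p • S) (hdisj : Disjoint (p • S) D) (hsup : p • S ⊔ D = p • N) :
    ∃ C ≤ N, Disjoint S C ∧ S ⊔ C = N := by
  set B := N ⊓ D.comap (p • LinearMap.id)
  have hN : N ≤ S ⊔ B := fun x hx => by
    have hpx : p • x ∈ p • S ⊔ D := hsup ▸ smul_mem_pointwise_smul x p N hx
    obtain ⟨_, hs', d, hd, hsd⟩ := mem_sup.1 hpx
    obtain ⟨s, hs, rfl⟩ := (mem_smul_pointwise_iff_exists _ _ _).1 hs'
    refine mem_sup.2 ⟨s, hs, x - s, ⟨sub_mem hx (hSN hs), ?_⟩, by abel⟩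
    simpa [smul_sub, ← hsd] using hd
  have hSB : Disjoint S (p • B) := disjoint_def.2 fun y hyS hyB => by
    obtain ⟨z, ⟨hzN, hzD⟩, rfl⟩ := (mem_smul_pointwise_iff_exists _ _ _).1 hyB
    exact disjoint_def.1 hdisj _ (hpure ⟨hyS, smul_mem_pointwise_smul z p N hzN⟩) hzD
  obtain ⟨C, hCB, hSC, hBC⟩ := exists_le_disjoint_le_sup_of_disjoint_smul hp hSB
  exact ⟨C, hCB.trans inf_le_left, hSC,
    le_antisymm (sup_le hSN (hCB.trans inf_le_left)) (hN.trans (sup_le le_sup_left hBC))⟩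

theorem exists_compl_of_pure (hp : Irreducible p) (k : ℕ) {S N : Submodule R M} (hSN : S ≤ N)
    (hpure : ∀ j : ℕ, S ⊓ p ^ j • N ≤ p ^ j • S) (hk : p ^ k • S = ⊥) :
    ∃ C ≤ N, Disjoint S C ∧ S ⊔ C = N := by
  induction k generalizing S N with
  | zero =>
    obtain rfl : S = ⊥ := by simpa using hk
    exact ⟨N, le_rfl, disjoint_bot_left, bot_sup_eq N⟩
  | succ k ih =>
    have hpure' (j : ℕ) : p • S ⊓ p ^ j • p • N ≤ p ^ j • p • S := by
      rw [← mul_smul, ← mul_smul, ← pow_succ]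
      exact (inf_le_inf_right _ (smul_le_self_of_tower p S)).trans (hpure (j + 1))
    obtain ⟨D, -, hdisj, hsup⟩ :=
      ih (smul_mono_right p hSN) hpure' (by rwa [← mul_smul, ← pow_succ])
    exact exists_compl_of_compl_smul hp hSN (by simpa using hpure 1) hdisj hsup

end Submodule

theorem pow_nsmul_eq_zero_of_nsmul_eq_zero {G : Type*} [AddMonoid G] {p m n : ℕ} (hp : p.Prime)
    {g : G} (hm : p ^ m • g = 0) (hn : 0 < n) (h : n • g = 0) : p ^ n • g = 0 := by
  obtain ⟨a, -, ha⟩ := (Nat.dvd_prime_pow hp).1 (addOrderOf_dvd_of_nsmul_eq_zero hm)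
  have han : p ^ a ≤ n := Nat.le_of_dvd hn (ha ▸ addOrderOf_dvd_of_nsmul_eq_zero h)
  exact addOrderOf_dvd_iff_nsmul_eq_zero.1 <| ha ▸
    pow_dvd_pow p ((Nat.lt_pow_self hp.one_lt).le.trans han)

namespace AddSubgroup

variable {G : Type*} [AddCommGroup G] {T : AddSubgroup G} {p : ℕ}

theorem mem_of_pow_nsmul_mem (hsat : ∀ g, p • g ∈ T → g ∈ T) (j : ℕ) {g : G}
    (h : p ^ j • g ∈ T) : g ∈ T := by
  induction j with
  | zero => simpa using h
  | succ j ih => exact ih (hsat _ (by rwa [← mul_nsmul, ← pow_succ]))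

theorem exists_retraction_of_pow_nsmul_eq_zero (hp : p.Prime) (hsat : ∀ g, p • g ∈ T → g ∈ T)
    {n : ℕ} (hT : ∀ t ∈ T, p ^ n • t = 0) :
    ∃ ψ : G →+ G, (∀ x, ψ x ∈ T) ∧ ∀ t ∈ T, ψ t = t := by
  have hpure (j : ℕ) : T.toIntSubmodule ⊓ (p : ℤ) ^ j • ⊤ ≤ (p : ℤ) ^ j • T.toIntSubmodule := by
    rintro _ ⟨hxT, hx⟩
    obtain ⟨g, -, rfl⟩ := (Submodule.mem_smul_pointwise_iff_exists _ _ _).1 hx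
    refine Submodule.smul_mem_pointwise_smul g _ _ (mem_of_pow_nsmul_mem hsat j ?_)
    simpa [← natCast_zsmul] using hxT
  have hbot : (p : ℤ) ^ n • T.toIntSubmodule = ⊥ := by
    refine eq_bot_iff.2 fun x hx => ?_
    obtain ⟨t, ht, rfl⟩ := (Submodule.mem_smul_pointwise_iff_exists _ _ _).1 hx
    simpa [← natCast_zsmul] using hT t ht
  obtain ⟨C, -, hdisj, hsup⟩ := Submodule.exists_compl_of_pure
    (Nat.prime_iff_prime_int.1 hp).irreducible n le_top hpure hbot
  have hc : IsCompl T.toIntSubmodule C := ⟨hdisj, codisjoint_iff.2 hsup⟩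
  refine ⟨(T.toIntSubmodule.subtype ∘ₗ T.toIntSubmodule.projectionOnto C hc).toAddMonoidHom,
    fun x => (T.toIntSubmodule.projectionOnto C hc x).2, fun t ht => ?_⟩
  simp [Submodule.projectionOnto_apply_of_mem_left hc (show t ∈ T.toIntSubmodule from ht)]

theorem injective_nsmul_add_of_retraction (hsat : ∀ g, p • g ∈ T → g ∈ T) {n : ℕ}
    (hT : ∀ t ∈ T, p ^ n • t = 0) {ψ : G →+ G} (hψT : ∀ x, ψ x ∈ T) (hψ : ∀ t ∈ T, ψ t = t) :
    Function.Injective (p • AddMonoidHom.id G + ψ) := by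
  refine (injective_iff_map_eq_zero _).2 fun x hx => ?_
  simp only [AddMonoidHom.add_apply, AddMonoidHom.smul_apply, AddMonoidHom.id_apply] at hx
  have hxT : x ∈ T := hsat x (by rw [eq_neg_of_add_eq_zero_left hx]; exact neg_mem (hψT x))
  rw [hψ x hxT, ← succ_nsmul] at hx
  have hcop : (p + 1).Coprime (p ^ n) :=
    (Nat.coprime_self_add_left.2 (Nat.coprime_one_left p)).pow_right n
  exact AddMonoid.addOrderOf_eq_one_iff.1 <| Nat.eq_one_of_dvd_coprimes hcop
    (addOrderOf_dvd_of_nsmul_eq_zero hx) (addOrderOf_dvd_of_nsmul_eq_zero (hT x hxT))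

end AddSubgroup

theorem stmt_5 (G : Type*) [AddCommGroup G] (p : ℕ) (hp : p.Prime)
    (T : AddSubgroup G)
    (hT : ∀ g : G, g ∈ T ↔ ∃ n : ℕ, p ^ n • g = 0)
    (hbdd : ∃ n : ℕ, 0 < n ∧ ∀ t ∈ T, n • t = 0)
    (hdiv : ¬ ∀ x : G ⧸ T, ∃ y : G ⧸ T, p • y = x) :
    ¬ IsCoHopfian G := by
  intro hco
  obtain ⟨n, hn, hbddn⟩ := hbdd
  have hsat (g : G) (hg : p • g ∈ T) : g ∈ T := by
    obtain ⟨m, hm⟩ := (hT _).1 hg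
    exact (hT g).2 ⟨m + 1, by rwa [pow_succ, mul_nsmul']⟩
  have hexp (t : G) (ht : t ∈ T) : p ^ n • t = 0 := by
    obtain ⟨m, hm⟩ := (hT t).1 ht
    exact pow_nsmul_eq_zero_of_nsmul_eq_zero hp hm hn (hbddn t ht)
  obtain ⟨ψ, hψT, hψ⟩ := T.exists_retraction_of_pow_nsmul_eq_zero hp hsat hexp
  refine hdiv fun x => ?_
  obtain ⟨g, rfl⟩ := QuotientAddGroup.mk_surjective x
  obtain ⟨y, hy⟩ := hco _ (AddSubgroup.injective_nsmul_add_of_retraction hsat hexp hψT hψ) g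
  exact ⟨y, by simp [← hy, (QuotientAddGroup.eq_zero_iff _).2 (hψT y)]⟩
end

section
/- If H is a pure subgroup of bounded exponent of an abelian group G, then H is a direct summand of G. -/
/-!
Let `n • H = 0`. By Zorn's lemma, take `K` maximal among the subgroups that contain `n • G`,
meet `H` trivially and modulo which `H` stays pure. If `H + K ≠ G`, the image of `H` in `G ⧸ K`,
a group of exponent dividing `n`, is a proper pure subgroup. There choose a prime `p` and an
element `z ∉ H` of order `p` whose `p`-height is maximal among such elements. Then `⟨z⟩` meets
`H` trivially, and the maximality of the height keeps `H` pure modulo `⟨z⟩`; the preimage of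
`⟨z⟩` in `G` contradicts the maximality of `K`.
-/

/-- A subgroup `H` of `G` is pure if every equation `n • g = k` with `k ∈ H`
solvable in `G` is solvable in `H`. -/
def IsPureSubgroup {G : Type*} [AddCommGroup G] (H : AddSubgroup G) : Prop :=
  ∀ n : ℕ, 0 < n → ∀ k ∈ H, (∃ g : G, n • g = k) → ∃ h ∈ H, n • h = k

open AddSubgroup

section

variable {G : Type*} [AddCommGroup G]

/-- The image of `H` in `G ⧸ K` is pure, phrased without passing to the quotient. -/
def IsPureModulo (H K : AddSubgroup G) : Prop :=
  ∀ (m : ℕ) (y h : G), h ∈ H → m • y - h ∈ K → ∃ h' ∈ H, m • y - m • h' ∈ K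

theorem IsPureModulo.comap {Q : Type*} [AddCommGroup Q] (f : G →+ Q) {H : AddSubgroup G}
    {L : AddSubgroup Q} (hH : IsPureModulo (H.map f) L) : IsPureModulo H (L.comap f) := by
  intro m y h hh hmem
  obtain ⟨_, ⟨h', hh', rfl⟩, hm⟩ :=
    hH m (f y) (f h) (mem_map_of_mem f hh) (by simpa using hmem)
  exact ⟨h', hh', by simpa using hm⟩

theorem IsPureModulo.isPureSubgroup_map_mk' {H K : AddSubgroup G} (hH : IsPureModulo H K) :
    IsPureSubgroup (H.map (QuotientAddGroup.mk' K)) := by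
  rintro m - _ ⟨h, hh, rfl⟩ ⟨q, hq⟩
  obtain ⟨y, rfl⟩ := QuotientAddGroup.mk'_surjective K q
  simp only [QuotientAddGroup.mk'_apply, ← QuotientAddGroup.mk_nsmul,
    QuotientAddGroup.eq_iff_sub_mem] at hq ⊢
  obtain ⟨h', hh', hm⟩ := hH m y h hh hq
  refine ⟨h', mem_map_of_mem _ hh', ?_⟩
  rw [← QuotientAddGroup.mk_nsmul, QuotientAddGroup.eq_iff_sub_mem]
  simpa using sub_mem hq hm

theorem isPureModulo_sSup_of_directedOn {H : AddSubgroup G} {c : Set (AddSubgroup G)}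
    (hc : c.Nonempty) (hdir : DirectedOn (· ≤ ·) c) (hpure : ∀ K ∈ c, IsPureModulo H K) :
    IsPureModulo H (sSup c) := by
  intro m y h hh hmem
  obtain ⟨K, hK, hmem⟩ := (mem_sSup_of_directedOn hc hdir).1 hmem
  obtain ⟨h', hh', hm⟩ := hpure K hK m y h hh hmem
  exact ⟨h', hh', (mem_sSup_of_directedOn hc hdir).2 ⟨K, hK, hm⟩⟩

theorem disjoint_sSup_of_directedOn {H : AddSubgroup G} {c : Set (AddSubgroup G)}
    (hc : c.Nonempty) (hdir : DirectedOn (· ≤ ·) c) (hdisj : ∀ K ∈ c, Disjoint H K) :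
    Disjoint H (sSup c) := by
  rw [disjoint_def]
  intro x hxH hx
  obtain ⟨K, hK, hxK⟩ := (mem_sSup_of_directedOn hc hdir).1 hx
  exact disjoint_def.1 (hdisj K hK) hxH hxK

theorem nsmul_gcdA_zsmul {x : G} {n : ℕ} (hx : n • x = 0) (m : ℕ) :
    m • (Nat.gcdA m n • x) = Nat.gcd m n • x := by
  rw [← natCast_zsmul, smul_smul, ← natCast_zsmul _ (Nat.gcd m n), Nat.gcd_eq_gcd_ab m n,
    add_smul, mul_comm (n : ℤ), mul_smul (Nat.gcdB m n), natCast_zsmul _ n, hx, smul_zero,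
    add_zero]

theorem disjoint_range_nsmul {H : AddSubgroup G} (hH : IsPureSubgroup H) {n : ℕ} (hn : 0 < n)
    (hnH : ∀ h ∈ H, n • h = 0) : Disjoint H (nsmulAddMonoidHom n : G →+ G).range := by
  rw [disjoint_def]
  rintro _ hx ⟨g, rfl⟩
  obtain ⟨h, hh, hgh⟩ := hH n hn _ hx ⟨g, rfl⟩
  rw [← hgh, hnH h hh]

theorem isPureModulo_range_nsmul {H : AddSubgroup G} (hH : IsPureSubgroup H) {n : ℕ} (hn : 0 < n)
    (hnH : ∀ h ∈ H, n • h = 0) : IsPureModulo H (nsmulAddMonoidHom n : G →+ G).range := by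
  rintro m y h hh ⟨g, hg⟩
  change n • g = m • y - h at hg
  have hdiv : Nat.gcd m n • ((m / Nat.gcd m n) • y - (n / Nat.gcd m n) • g) = h := by
    rw [smul_sub, smul_smul, smul_smul, Nat.mul_div_cancel' (Nat.gcd_dvd_left m n),
      Nat.mul_div_cancel' (Nat.gcd_dvd_right m n), hg, sub_sub_cancel]
  obtain ⟨h₁, hh₁, rfl⟩ := hH _ (Nat.gcd_pos_of_pos_right m hn) h hh ⟨_, hdiv⟩
  refine ⟨Nat.gcdA m n • h₁, zsmul_mem hh₁ _, g, ?_⟩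
  rw [nsmul_gcdA_zsmul (hnH h₁ hh₁)]
  exact hg

variable {p : ℕ}

theorem disjoint_zmultiples_of_prime (hp : p.Prime) {H : AddSubgroup G} {z : G}
    (hz : p • z = 0) (hzH : z ∉ H) : Disjoint H (zmultiples z) := by
  rw [disjoint_def]
  rintro _ hx ⟨c, rfl⟩
  change c • z ∈ H at hx
  rw [← natCast_zsmul] at hz
  by_cases hpc : (p : ℤ) ∣ c
  · obtain ⟨d, rfl⟩ := hpc
    change (p * d) • z = 0
    rw [mul_comm, mul_zsmul, hz, zsmul_zero]
  · obtain ⟨a, b, hab⟩ := (Nat.prime_iff_prime_int.1 hp).coprime_iff_not_dvd.2 hpc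
    have hbcz : b • c • z = z := by linear_combination (norm := module) hab • z - a • hz
    exact absurd (hbcz ▸ zsmul_mem hx b) hzH

theorem exists_nsmul_eq_of_pow_nsmul_eq (hp : p.Prime) {x : G} (hx : p • x = 0) {b m : ℕ}
    (hpm : ¬ p ∣ m) (hdiv : ∃ g, p ^ b • g = x) : ∃ g, (p ^ b * m) • g = x := by
  obtain ⟨g, rfl⟩ := hdiv
  obtain ⟨a, e, hae⟩ := Nat.isCoprime_iff_coprime.2 ((Nat.Prime.coprime_iff_not_dvd hp).2 hpm)
  refine ⟨e • g, ?_⟩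
  simp only [← natCast_zsmul, Nat.cast_mul, Nat.cast_pow] at hx ⊢
  linear_combination (norm := module) hae • ((p : ℤ) ^ b • g) - a • hx

theorem pow_factorization_nsmul_eq_zero (hp : p.Prime) {n : ℕ} (hn : 0 < n)
    (hG : ∀ g : G, n • g = 0) {g : G} (hg : p • (p ^ n.factorization p • g) = 0) :
    p ^ n.factorization p • g = 0 := by
  have hcompl : (n / p ^ n.factorization p) • p ^ n.factorization p • g = 0 := by
    rw [smul_smul, mul_comm, Nat.ordProj_mul_ordCompl_eq_self, hG]
  rw [← AddMonoid.addOrderOf_eq_one_iff, ← Nat.dvd_one,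
    ← (Nat.coprime_ordCompl hp hn.ne').gcd_eq_one]
  exact Nat.dvd_gcd (addOrderOf_dvd_of_nsmul_eq_zero hg) (addOrderOf_dvd_of_nsmul_eq_zero hcompl)

theorem exists_prime_nsmul_eq_zero_notMem {H : AddSubgroup G} (hH : IsPureSubgroup H)
    {n : ℕ} (hn : 0 < n) (hG : ∀ g : G, n • g = 0) {y : G} (hy : y ∉ H) :
    ∃ p : ℕ, p.Prime ∧ ∃ w ∉ H, p • w = 0 := by
  set q := addOrderOf (y : G ⧸ H)
  have hq0 : 0 < q := addOrderOf_pos_iff.2 (isOfFinAddOrder_iff_nsmul_eq_zero.2 ⟨n, hn, by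
    rw [← QuotientAddGroup.mk_nsmul, hG, QuotientAddGroup.mk_zero]⟩)
  have hq1 : q ≠ 1 := by
    rwa [Ne, AddMonoid.addOrderOf_eq_one_iff, QuotientAddGroup.eq_zero_iff]
  have hp := Nat.minFac_prime hq1
  set p := q.minFac
  have hy₁ : (q / p) • y ∉ H := by
    rw [← QuotientAddGroup.eq_zero_iff, QuotientAddGroup.mk_nsmul]
    exact nsmul_ne_zero_of_lt_addOrderOf (Nat.div_pos (Nat.minFac_le hq0) hp.pos).ne'
      (Nat.div_lt_self hq0 hp.one_lt)
  have hpy₁ : p • (q / p) • y ∈ H := by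
    rw [smul_smul, Nat.mul_div_cancel' (Nat.minFac_dvd q), ← QuotientAddGroup.eq_zero_iff,
      QuotientAddGroup.mk_nsmul, addOrderOf_nsmul_eq_zero]
  obtain ⟨h₀, hh₀, hph₀⟩ := hH p hp.pos _ hpy₁ ⟨_, rfl⟩
  refine ⟨p, hp, (q / p) • y - h₀, fun hmem => hy₁ ?_, by rw [smul_sub, hph₀, sub_self]⟩
  simpa using add_mem hmem hh₀

theorem exists_notMem_of_maximal_height (hp : p.Prime) {H : AddSubgroup G} {n : ℕ} (hn : 0 < n)
    (hG : ∀ g : G, n • g = 0) {w : G} (hw : p • w = 0) (hwH : w ∉ H) :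
    ∃ z k, p • z = 0 ∧ z ∉ H ∧ (∃ g, p ^ k • g = z) ∧
      ∀ x, p • x = 0 → (∃ g, p ^ (k + 1) • g = x) → x ∈ H := by
  classical
  -- A nonzero element of order `p` has `p`-height below `n.factorization p`.
  set P : ℕ → Prop := fun j => ∃ z, p • z = 0 ∧ z ∉ H ∧ ∃ g, p ^ j • g = z
  set v := n.factorization p
  obtain ⟨z, hz, hzH, hzk⟩ : P (Nat.findGreatest P v) :=
    Nat.findGreatest_spec (Nat.zero_le v) ⟨w, hw, hwH, w, by rw [pow_zero, one_smul]⟩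
  refine ⟨z, _, hz, hzH, hzk, fun x hx ⟨g, hg⟩ => by_contra fun hxH => ?_⟩
  by_cases hkv : Nat.findGreatest P v + 1 ≤ v
  · exact Nat.findGreatest_is_greatest (Nat.lt_succ_self _) hkv ⟨x, hx, hxH, g, hg⟩
  · have hxv : p ^ v • p ^ (Nat.findGreatest P v + 1 - v) • g = x := by
      rw [smul_smul, ← pow_add, Nat.add_sub_cancel' (by omega), hg]
    rw [← hxv] at hx hxH
    exact hxH (by rw [pow_factorization_nsmul_eq_zero hp hn hG hx]; exact zero_mem H)

section MaximalHeight

variable (hp : p.Prime) {H : AddSubgroup G} {z : G} {k : ℕ} (hz : p • z = 0)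
  (hzH : z ∉ H) (hzk : ∃ g, p ^ k • g = z)
  (hmax : ∀ x, p • x = 0 → (∃ g, p ^ (k + 1) • g = x) → x ∈ H)
include hp hz hzH hzk hmax

theorem exists_pow_nsmul_eq_of_add_zsmul {x : G} (hx : x ∈ H) (hpx : p • x = 0) (c : ℤ)
    {b : ℕ} (hdiv : ∃ g, p ^ b • g = x + c • z) : ∃ g, p ^ b • g = x := by
  obtain ⟨g, hg⟩ := hdiv
  by_cases hbk : b ≤ k
  · obtain ⟨gz, rfl⟩ := hzk
    refine ⟨g - c • p ^ (k - b) • gz, ?_⟩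
    rw [smul_sub, hg, smul_comm (p ^ b) c, smul_smul, ← pow_add, Nat.add_sub_cancel' hbk,
      add_sub_cancel_right]
  · have hsum : x + c • z ∈ H :=
      hmax _ (by rw [smul_add, hpx, smul_comm, hz, zsmul_zero, add_zero])
        ⟨p ^ (b - (k + 1)) • g, by rw [smul_smul, ← pow_add, Nat.add_sub_cancel' (by omega), hg]⟩
    have hcz : c • z = 0 := disjoint_def.1 (disjoint_zmultiples_of_prime hp hz hzH)
      (by simpa using sub_mem hsum hx) (zsmul_mem_zmultiples z c)
    exact ⟨g, by rw [hg, hcz, add_zero]⟩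

theorem isPureModulo_zmultiples (hH : IsPureSubgroup H) : IsPureModulo H (zmultiples z) := by
  intro m y h hh hmem
  obtain ⟨c, hc⟩ := mem_zmultiples_iff.1 hmem
  rcases Nat.eq_zero_or_pos m with rfl | hm
  · exact ⟨0, zero_mem H, by simp⟩
  have hpmy : (p * m) • y = p • h := by
    rw [mul_nsmul', ← sub_eq_zero, ← smul_sub, ← hc, smul_comm, hz, zsmul_zero]
  obtain ⟨h₁, hh₁, hph₁⟩ :=
    hH (p * m) (Nat.mul_pos hp.pos hm) _ (nsmul_mem hh p) ⟨y, hpmy⟩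
  set x := h - m • h₁ with hxdef
  have hx : x ∈ H := sub_mem hh (nsmul_mem hh₁ m)
  have hpx : p • x = 0 := by rw [smul_sub, smul_smul, hph₁, sub_self]
  have hxc : x + c • z = m • (y - h₁) := by rw [hc, hxdef, smul_sub]; abel
  set b := m.factorization p
  have hmb : p ^ b * (m / p ^ b) = m := Nat.ordProj_mul_ordCompl_eq_self m p
  obtain ⟨g, hg⟩ := exists_nsmul_eq_of_pow_nsmul_eq hp hpx (Nat.not_dvd_ordCompl hp hm.ne') <|
    exists_pow_nsmul_eq_of_add_zsmul hp hz hzH hzk hmax hx hpx c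
      ⟨(m / p ^ b) • (y - h₁), by rw [smul_smul, hmb, hxc]⟩
  rw [hmb] at hg
  obtain ⟨h₂, hh₂, hmh₂⟩ := hH m hm x hx ⟨g, hg⟩
  refine ⟨h₁ + h₂, add_mem hh₁ hh₂, ?_⟩
  rw [smul_add, hmh₂, hxdef, add_sub_cancel]
  exact hmem

end MaximalHeight

theorem exists_disjoint_zmultiples_isPureModulo {H : AddSubgroup G} (hH : IsPureSubgroup H)
    {n : ℕ} (hn : 0 < n) (hG : ∀ g : G, n • g = 0) {y : G} (hy : y ∉ H) :
    ∃ z ∉ H, Disjoint H (zmultiples z) ∧ IsPureModulo H (zmultiples z) := by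
  obtain ⟨p, hp, w, hwH, hw⟩ := exists_prime_nsmul_eq_zero_notMem hH hn hG hy
  obtain ⟨z, k, hz, hzH, hzk, hmax⟩ := exists_notMem_of_maximal_height hp hn hG hw hwH
  exact ⟨z, hzH, disjoint_zmultiples_of_prime hp hz hzH,
    isPureModulo_zmultiples hp hz hzH hzk hmax hH⟩

theorem exists_gt_disjoint_isPureModulo {H K : AddSubgroup G} {n : ℕ} (hn : 0 < n)
    (hnK : ∀ g : G, n • g ∈ K) (hdisj : Disjoint H K) (hpure : IsPureModulo H K)
    (htop : H ⊔ K ≠ ⊤) : ∃ K', K < K' ∧ Disjoint H K' ∧ IsPureModulo H K' := by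
  set π := QuotientAddGroup.mk' K
  have hnQ (q : G ⧸ K) : n • q = 0 := by
    induction q using QuotientAddGroup.induction_on with
    | H g => rw [← QuotientAddGroup.mk_nsmul, QuotientAddGroup.eq_zero_iff]; exact hnK g
  obtain ⟨y, hy⟩ := SetLike.exists_not_mem_of_ne_top _ htop
  have hyH : π y ∉ H.map π := by
    rintro ⟨h, hh, hhy⟩
    exact hy (mem_sup.2 ⟨h, hh, y - h, QuotientAddGroup.eq_iff_sub_mem.1 hhy.symm,
      add_sub_cancel h y⟩)
  obtain ⟨z, hzH, hzdisj, hzpure⟩ :=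
    exists_disjoint_zmultiples_isPureModulo hpure.isPureSubgroup_map_mk' hn hnQ hyH
  obtain ⟨z, rfl⟩ := QuotientAddGroup.mk'_surjective K z
  have hKK' : K ≤ (zmultiples (π z)).comap π := fun x hx => by
    simp [π, (QuotientAddGroup.eq_zero_iff x).2 hx]
  refine ⟨(zmultiples (π z)).comap π, SetLike.lt_iff_le_and_exists.2 ⟨hKK', z, ?_, ?_⟩, ?_,
    hzpure.comap π⟩
  · exact mem_comap.2 (mem_zmultiples _)
  · intro hzK
    refine hzH ?_
    rw [QuotientAddGroup.mk'_apply, (QuotientAddGroup.eq_zero_iff z).2 hzK]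
    exact zero_mem _
  · rw [disjoint_def]
    intro x hxH hx
    exact disjoint_def.1 hdisj hxH <| (QuotientAddGroup.eq_zero_iff x).1 <|
      disjoint_def.1 hzdisj (mem_map_of_mem π hxH) hx

end

theorem stmt_6 (G : Type*) [AddCommGroup G] (H : AddSubgroup G)
    (hpure : IsPureSubgroup H)
    (hbdd : ∃ n : ℕ, 0 < n ∧ ∀ h ∈ H, n • h = 0) :
    ∃ K : AddSubgroup G, IsCompl H K := by
  obtain ⟨n, hn, hnH⟩ := hbdd
  set S : Set (AddSubgroup G) :=
    {K | (∀ g : G, n • g ∈ K) ∧ Disjoint H K ∧ IsPureModulo H K}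
  obtain ⟨K, -, hK⟩ := zorn_le_nonempty₀ S
    (fun c hcS hc K hK => ⟨sSup c, ⟨fun g => le_sSup hK ((hcS hK).1 g),
      disjoint_sSup_of_directedOn ⟨K, hK⟩ hc.directedOn fun K' hK' => (hcS hK').2.1,
      isPureModulo_sSup_of_directedOn ⟨K, hK⟩ hc.directedOn fun K' hK' => (hcS hK').2.2⟩,
      fun _ => le_sSup⟩)
    (nsmulAddMonoidHom n : G →+ G).range
    ⟨fun g => ⟨g, rfl⟩, disjoint_range_nsmul hpure hn hnH,
      isPureModulo_range_nsmul hpure hn hnH⟩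
  refine ⟨K, hK.prop.2.1, codisjoint_iff.2 (by_contra fun htop => ?_)⟩
  obtain ⟨K', hKK', hK'⟩ :=
    exists_gt_disjoint_isPureModulo hn hK.prop.1 hK.prop.2.1 hK.prop.2.2 htop
  exact hK.not_prop_of_gt hKK' ⟨fun g => hKK'.le (hK.prop.1 g), hK'⟩
end

section
/- Let G be an abelian group and T a pure subgroup of the torsion subgroup Tor(G). If T is a direct sum of a divisible group and a group of bounded exponent, then T is a direct summand of G. -/
/-!
Splitting `T = D ⊕ B` off in two steps. The divisible part `D` is injective, so `G = D ⊕ K₁`,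
and then `T = D ⊕ (T ⊓ K₁)` where `T ⊓ K₁` is pure in `G` (since `T` is, `Tor(G)` being pure)
and bounded. A bounded pure subgroup `S` with `n • S = 0` is a direct summand, by induction
on `n`: for a prime `p ∣ n`, the subgroup `S ⊓ pG = pS` is pure in `pG` and killed by `n / p`,
so it has a complement `C` in `pG`; a subgroup maximal among those containing `C` and
disjoint from `S` is then a complement of `S`.
-/

open AddSubgroup

theorem isCompl_inf_of_isCompl {α : Type*} [Lattice α] [BoundedOrder α] [IsModularLattice α]
    {D K₁ T K₂ : α} (h₁ : IsCompl D K₁) (hDT : D ≤ T) (h₂ : IsCompl (T ⊓ K₁) K₂) :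
    IsCompl T (K₁ ⊓ K₂) := by
  refine ⟨disjoint_iff.2 ?_, codisjoint_iff.2 ?_⟩
  · rw [← inf_assoc, h₂.inf_eq_bot]
  · have hK₁ : K₁ ≤ T ⊔ K₁ ⊓ K₂ :=
      calc K₁ = (T ⊓ K₁ ⊔ K₂) ⊓ K₁ := by rw [h₂.sup_eq_top, top_inf_eq]
        _ = T ⊓ K₁ ⊔ K₂ ⊓ K₁ := sup_inf_assoc_of_le _ inf_le_right
        _ ≤ T ⊔ K₁ ⊓ K₂ := by rw [inf_comm K₂]; exact sup_le_sup_right inf_le_left _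
    exact top_unique (h₁.sup_eq_top ▸ sup_le (hDT.trans le_sup_left) hK₁)

namespace AddSubgroup

variable {G : Type*} [AddCommGroup G]

/-- `S ⊓ nG = nS` for every `n`. -/
def IsPure (S : AddSubgroup G) : Prop :=
  ∀ (n : ℕ) (g : G), n • g ∈ S → ∃ s ∈ S, n • s = n • g

theorem isPure_of_le_torsion {T : AddSubgroup G} (hle : T ≤ AddCommGroup.torsion G)
    (hpure : ∀ n : ℕ, 0 < n → ∀ t ∈ T, (∃ g ∈ AddCommGroup.torsion G, n • g = t) →
      ∃ h ∈ T, n • h = t) :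
    T.IsPure := by
  intro n g hg
  rcases n.eq_zero_or_pos with rfl | hn
  · exact ⟨0, zero_mem T, by simp⟩
  obtain ⟨m, hm, hmg⟩ := isOfFinAddOrder_iff_nsmul_eq_zero.1 (hle hg)
  have hg_tor : g ∈ AddCommGroup.torsion G :=
    isOfFinAddOrder_iff_nsmul_eq_zero.2 ⟨m * n, Nat.mul_pos hm hn, by rw [mul_smul, hmg]⟩
  exact hpure n hn _ hg ⟨g, hg_tor, rfl⟩

theorem IsPure.inf_of_isCompl {T D K : AddSubgroup G} (hT : T.IsPure) (hDK : IsCompl D K)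
    (hDT : D ≤ T) : (T ⊓ K).IsPure := by
  intro m g hg
  obtain ⟨t, ht, htg⟩ := hT m g (mem_inf.1 hg).1
  obtain ⟨d, hd, k, hk, rfl⟩ := mem_sup.1 (hDK.sup_eq_top ▸ mem_top t)
  have hmd : m • d = 0 := by
    refine disjoint_def.1 hDK.disjoint (nsmul_mem hd m) ?_
    have : m • d = m • g - m • k := by rw [← htg, smul_add, add_sub_cancel_right]
    exact this ▸ sub_mem (mem_inf.1 hg).2 (nsmul_mem hk m)
  have hkT : k ∈ T := by simpa using sub_mem ht (hDT hd)
  exact ⟨k, mem_inf.2 ⟨hkT, hk⟩, by rw [← htg, smul_add, hmd, zero_add]⟩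

theorem nsmul_mem_of_codisjoint {D B : AddSubgroup G} (h : Codisjoint D B) {n : ℕ}
    (hB : ∀ b ∈ B, n • b = 0) (g : G) : n • g ∈ D := by
  obtain ⟨d, hd, b, hb, rfl⟩ := mem_sup.1 (h.eq_top ▸ mem_top g)
  rw [smul_add, hB b hb, add_zero]
  exact nsmul_mem hd n

theorem isCompl_ker_of_retraction {D : AddSubgroup G} (r : G →+ D) (hr : ∀ d : D, r d = d) :
    IsCompl D r.ker := by
  refine ⟨disjoint_def.2 fun {x} hxD hxr => ?_, codisjoint_iff.2 ((eq_top_iff' _).2 fun g => ?_)⟩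
  · simpa [AddMonoidHom.mem_ker.1 hxr] using (congrArg Subtype.val (hr ⟨x, hxD⟩)).symm
  · have hker : g - r g ∈ r.ker := by simp [AddMonoidHom.mem_ker, hr]
    simpa using add_mem (mem_sup_left (r g).2) (mem_sup_right hker)

theorem exists_isCompl_of_divisible {D : AddSubgroup G}
    (hD : ∀ x ∈ D, ∀ n : ℕ, 0 < n → ∃ y ∈ D, n • y = x) : ∃ K : AddSubgroup G, IsCompl D K := by
  let _ : DivisibleBy D ℕ := divisibleByOfSMulRightSurj D ℕ fun {n} hn ⟨x, hx⟩ =>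
    let ⟨y, hy, hyx⟩ := hD x hx n (Nat.pos_of_ne_zero hn)
    ⟨⟨y, hy⟩, Subtype.ext hyx⟩
  let _ : DivisibleBy D ℤ := AddGroup.divisibleByIntOfDivisibleByNat D
  obtain ⟨r, hr⟩ := (Module.Baer.of_divisible D).extension_property_addMonoidHom D.subtype
    Subtype.val_injective (AddMonoidHom.id D)
  exact ⟨r.ker, isCompl_ker_of_retraction r (DFunLike.congr_fun hr)⟩

theorem disjoint_sup_zmultiples {S K : AddSubgroup G} (hSK : Disjoint S K) {p : ℕ}
    (hp : p.Prime) {g : G} (hg : g ∉ S ⊔ K) (hpg : p • g ∈ K) :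
    Disjoint S (K ⊔ zmultiples g) := by
  refine disjoint_def.2 fun {x} hxS hx => ?_
  obtain ⟨k, hk, _, hm, rfl⟩ := mem_sup.1 hx
  obtain ⟨m, rfl⟩ := mem_zmultiples_iff.1 hm
  by_cases hpm : (p : ℤ) ∣ m
  · obtain ⟨m', rfl⟩ := hpm
    have hmg : (p * m' : ℤ) • g ∈ K := by
      rw [mul_comm, mul_smul, natCast_zsmul]
      exact zsmul_mem hpg m'
    exact disjoint_def.1 hSK hxS (add_mem hk hmg)
  · -- Bézout: `g = u • p • g + v • m • g` with `p • g ∈ K` and `m • g ∈ S ⊔ K`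
    obtain ⟨u, v, huv⟩ := (Nat.prime_iff_prime_int.1 hp).coprime_iff_not_dvd.2 hpm
    have hmg : m • g ∈ S ⊔ K := by
      simpa using sub_mem (mem_sup_left hxS) (mem_sup_right hk : k ∈ S ⊔ K)
    have hpg' : (p : ℤ) • g ∈ S ⊔ K := by rw [natCast_zsmul]; exact mem_sup_right hpg
    refine absurd ?_ hg
    rw [← one_smul ℤ g, ← huv, add_smul, mul_smul, mul_smul]
    exact add_mem (zsmul_mem hpg' u) (zsmul_mem hmg v)

theorem exists_isCompl_of_forall_nsmul_sub_mem {S C : AddSubgroup G} (hSC : Disjoint S C) {p : ℕ}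
    (hp : p.Prime) (hC : ∀ g, ∃ s ∈ S, p • (g - s) ∈ C) : ∃ K : AddSubgroup G, IsCompl S K := by
  obtain ⟨K, hCK, hK, hKmax⟩ := zorn_le_nonempty₀ {K : AddSubgroup G | Disjoint S K}
    (fun c hc hchain K₀ hK₀ => by
      refine ⟨sSup c, disjoint_def.2 fun {x} hxS hx => ?_, fun _ => le_sSup⟩
      obtain ⟨K, hKc, hxK⟩ := (mem_sSup_of_directedOn ⟨K₀, hK₀⟩ hchain.directedOn).1 hx
      exact disjoint_def.1 (hc hKc) hxS hxK) C hSC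
  refine ⟨K, hK, codisjoint_iff.2 ((eq_top_iff' _).2 fun g => by_contra fun hg => ?_)⟩
  obtain ⟨s, hs, hps⟩ := hC g
  have hg' : g - s ∉ S ⊔ K := fun h => hg (by simpa using add_mem h (mem_sup_left hs))
  have hle := hKmax (disjoint_sup_zmultiples hK hp hg' (hCK hps)) le_sup_left
  exact hg' (mem_sup_right (hle (mem_sup_right (mem_zmultiples _))))

theorem IsPure.addSubgroupOf_range_nsmul {S : AddSubgroup G} (hS : S.IsPure) (p : ℕ) :
    (S.addSubgroupOf (nsmulAddMonoidHom p : G →+ G).range).IsPure := by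
  rintro m ⟨_, z, rfl⟩ hmz
  obtain ⟨s, hs, hsz⟩ := hS (m * p) z (by simpa [mul_smul] using mem_addSubgroupOf.1 hmz)
  refine ⟨⟨p • s, s, rfl⟩, mem_addSubgroupOf.2 (nsmul_mem hs p), Subtype.ext ?_⟩
  simpa [mul_smul] using hsz

theorem IsPure.exists_isCompl_of_isCompl_range_nsmul {S : AddSubgroup G} (hS : S.IsPure) {p : ℕ}
    (hp : p.Prime) {C : AddSubgroup (nsmulAddMonoidHom p : G →+ G).range}
    (hC : IsCompl (S.addSubgroupOf _) C) : ∃ K : AddSubgroup G, IsCompl S K := by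
  refine exists_isCompl_of_forall_nsmul_sub_mem (C := C.map (AddSubgroup.subtype _)) ?_ hp fun g => ?_
  · refine disjoint_def.2 ?_
    rintro _ hxS ⟨c, hc, rfl⟩
    have : c ∈ S.addSubgroupOf _ ⊓ C := ⟨mem_addSubgroupOf.2 hxS, hc⟩
    rw [hC.inf_eq_bot, mem_bot] at this
    simp [this]
  · obtain ⟨a, ha, c, hc, hac⟩ := mem_sup.1 (hC.sup_eq_top ▸
      mem_top (⟨_, g, rfl⟩ : (nsmulAddMonoidHom p : G →+ G).range))
    obtain ⟨z, hz⟩ := a.2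
    simp only [nsmulAddMonoidHom_apply] at hz
    obtain ⟨s, hs, hsz⟩ := hS p z (hz ▸ mem_addSubgroupOf.1 ha)
    refine ⟨s, hs, c, hc, ?_⟩
    have hac' : (a : G) + c = p • g := congrArg Subtype.val hac
    rw [subtype_apply, smul_sub, hsz, hz, ← hac', add_sub_cancel_left]

theorem IsPure.exists_isCompl_of_nsmul_eq_zero {S : AddSubgroup G} (hS : S.IsPure) {n : ℕ}
    (hn : 0 < n) (hnS : ∀ x ∈ S, n • x = 0) : ∃ K : AddSubgroup G, IsCompl S K := by
  induction n using Nat.strong_induction_on generalizing G with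
  | _ n ih =>
  obtain rfl | hn1 := eq_or_ne n 1
  · obtain rfl : S = ⊥ := (eq_bot_iff_forall S).2 fun x hx => by simpa using hnS x hx
    exact ⟨⊤, isCompl_bot_top⟩
  set p := n.minFac
  have hp : p.Prime := Nat.minFac_prime hn1
  have hpn : p ∣ n := Nat.minFac_dvd n
  -- `S ⊓ pG = pS` by purity, and `pS` is killed by `n / p`
  have hnS' : ∀ x ∈ S.addSubgroupOf (nsmulAddMonoidHom p : G →+ G).range, (n / p) • x = 0 := by
    rintro ⟨_, z, rfl⟩ hx
    obtain ⟨s, hs, hsz⟩ := hS p z (by simpa using mem_addSubgroupOf.1 hx)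
    refine Subtype.ext ?_
    simp only [coe_nsmul, nsmulAddMonoidHom_apply, ZeroMemClass.coe_zero]
    rw [← hsz, smul_smul, Nat.div_mul_cancel hpn, hnS s hs]
  obtain ⟨C, hC⟩ := ih (n / p) (Nat.div_lt_self hn hp.one_lt) (hS.addSubgroupOf_range_nsmul p)
    (Nat.div_pos (Nat.le_of_dvd hn hpn) hp.pos) hnS'
  exact hS.exists_isCompl_of_isCompl_range_nsmul hp hC

end AddSubgroup

theorem stmt_7 (G : Type*) [AddCommGroup G] (T Tor : AddSubgroup G)
    (hTor : ∀ g : G, g ∈ Tor ↔ ∃ n : ℕ, 0 < n ∧ n • g = 0)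
    (hle : T ≤ Tor)
    -- T is pure in Tor(G)
    (hpure : ∀ n : ℕ, 0 < n → ∀ t ∈ T, (∃ g ∈ Tor, n • g = t) → ∃ h ∈ T, n • h = t)
    -- T is the (internal) direct sum of a divisible subgroup and a bounded one
    (hsum : ∃ D B : AddSubgroup T, IsCompl D B ∧
      (∀ x ∈ D, ∀ n : ℕ, 0 < n → ∃ y ∈ D, n • y = x) ∧
      (∃ n : ℕ, 0 < n ∧ ∀ b ∈ B, n • b = 0)) :
    ∃ K : AddSubgroup G, IsCompl T K := by
  obtain ⟨D, B, hDB, hD, n, hn, hB⟩ := hsum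
  obtain rfl : Tor = AddCommGroup.torsion G := AddSubgroup.ext fun g => by
    rw [hTor, AddCommGroup.mem_torsion, isOfFinAddOrder_iff_nsmul_eq_zero]
  have hT : T.IsPure := isPure_of_le_torsion hle hpure
  set D' := D.map T.subtype
  have hD'T : D' ≤ T := map_subtype_le D
  have hD' : ∀ x ∈ D', ∀ m : ℕ, 0 < m → ∃ y ∈ D', m • y = x := by
    rintro _ ⟨d, hd, rfl⟩ m hm
    obtain ⟨y, hy, rfl⟩ := hD d hd m hm
    exact ⟨_, mem_map_of_mem _ hy, (map_nsmul _ _ _).symm⟩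
  obtain ⟨K₁, hK₁⟩ := exists_isCompl_of_divisible hD'
  have hnT : ∀ x ∈ T, n • x ∈ D' := fun x hx =>
    ⟨_, nsmul_mem_of_codisjoint hDB.codisjoint hB ⟨x, hx⟩, rfl⟩
  obtain ⟨K₂, hK₂⟩ := (hT.inf_of_isCompl hK₁ hD'T).exists_isCompl_of_nsmul_eq_zero hn
    fun x hx => disjoint_def.1 hK₁.disjoint (hnT x (mem_inf.1 hx).1) (nsmul_mem (mem_inf.1 hx).2 n)
  exact ⟨K₁ ⊓ K₂, isCompl_inf_of_isCompl hK₁ hD'T hK₂⟩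
end

section
/- Let K be an abelian torsion group of bounded exponent, let G be a pure subgroup of an abelian group H, and let g : G → K be a group homomorphism. Then g extends to a group homomorphism h : H → K. -/
/-- Bezout-type helper: if `m • _ = 0` on `K` and `k` is divisible by `gcd q m`,
then `k` is divisible by `q`. -/
lemma gcd_smul_surj_aux {K : Type*} [AddCommGroup K] (m q : ℕ)
    (hmK : ∀ x : K, m • x = 0) (k : K)
    (h : ∃ w : K, Nat.gcd q m • w = k) : ∃ w : K, q • w = k := by
  obtain ⟨w, rfl⟩ := h
  refine ⟨Nat.gcdA q m • w, ?_⟩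
  have hmw : (m : ℤ) • w = 0 := by rw [natCast_zsmul]; exact hmK w
  have hbez : ((Nat.gcd q m : ℕ) : ℤ) • w
      = ((q : ℤ) * Nat.gcdA q m + (m : ℤ) * Nat.gcdB q m) • w := by
    rw [Nat.gcd_eq_gcd_ab q m]
  linear_combination (norm := module) -hbez - Nat.gcdB q m • hmw

theorem stmt_12 (H K : Type*) [AddCommGroup H] [AddCommGroup K]
    (htors : ∀ x : K, ∃ n : ℕ, 0 < n ∧ n • x = 0)
    (hbdd : ∃ n : ℕ, 0 < n ∧ ∀ x : K, n • x = 0)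
    (G : AddSubgroup H) (hpure : IsPureSubgroup G)
    (g : G →+ K) :
    ∃ h : H →+ K, ∀ x : G, h x = g x := by
  classical
  obtain ⟨m, hm0, hmK⟩ := hbdd
  -- The set of "good" partial extension graphs.
  set Good : Set (AddSubgroup (H × K)) :=
    {S | (∀ a : G, ((a : H), g a) ∈ S) ∧ (∀ x : H, ((m • x, (0 : K)) : H × K) ∈ S) ∧
      ∀ p ∈ S, ∀ q : ℕ, 0 < q → (∃ z : H, q • z = Prod.fst p) → ∃ w : K, q • w = Prod.snd p}
    with hGood
  -- The initial graph: graph of g together with (m•x, 0).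
  set φ : G →+ H × K := (G.subtype).prod g with hφ
  set ψ : H →+ H × K := AddMonoidHom.mk' (fun x : H => (m • x, (0 : K)))
    (by intro a b; simp [smul_add, Prod.ext_iff]) with hψ
  set S0 : AddSubgroup (H × K) := φ.range ⊔ ψ.range with hS0def
  have hS0 : S0 ∈ Good := by
    refine ⟨?_, ?_, ?_⟩
    · intro a
      exact AddSubgroup.mem_sup_left ⟨a, rfl⟩
    · intro x
      exact AddSubgroup.mem_sup_right ⟨x, rfl⟩
    · intro p hp q hq hz
      rw [hS0def, AddSubgroup.mem_sup] at hp
      obtain ⟨y, ⟨a, rfl⟩, z, ⟨x, rfl⟩, rfl⟩ := hp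
      obtain ⟨z0, hz0⟩ := hz
      -- p = ((a : H) + m • x, g a)
      have hfst : (φ a + ψ x).1 = (a : H) + m • x := rfl
      have hsnd : (φ a + ψ x).2 = g a := by simp [hφ, hψ]
      rw [hsnd]
      rw [hfst] at hz0
      set d : ℕ := Nat.gcd q m with hd
      have hd0 : 0 < d := Nat.gcd_pos_of_pos_left m hq
      obtain ⟨q', hq'⟩ : d ∣ q := Nat.gcd_dvd_left q m
      obtain ⟨m', hm'⟩ : d ∣ m := Nat.gcd_dvd_right q m
      have hadiv : ∃ b : H, d • b = (a : H) := by
        refine ⟨q' • z0 - m' • x, ?_⟩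
        have h2 : (a : H) = q • z0 - m • x := by
          rw [hz0]; abel
        rw [h2, smul_sub, ← mul_smul, ← mul_smul, ← hq', ← hm']
      obtain ⟨b, hbG, hb⟩ := hpure d hd0 (a : H) a.2 hadiv
      have hga : g a = d • g ⟨b, hbG⟩ := by
        have h3 : (d • (⟨b, hbG⟩ : G)) = a := by
          ext
          simpa using hb
        rw [← h3, map_nsmul]
      exact gcd_smul_surj_aux m q hmK (g a) ⟨g ⟨b, hbG⟩, hga.symm⟩
  -- Zorn's lemma.
  have hchainub : ∀ c ⊆ Good, IsChain (· ≤ ·) c → ∀ y ∈ c,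
      ∃ ub ∈ Good, ∀ z ∈ c, z ≤ ub := by
    intro c hcG hchain y hyc
    refine ⟨sSup c, ⟨?_, ?_, ?_⟩, fun z hz => le_sSup hz⟩
    · intro a; exact (le_sSup hyc) ((hcG hyc).1 a)
    · intro x; exact (le_sSup hyc) ((hcG hyc).2.1 x)
    · intro p hp q hq hz
      rw [AddSubgroup.mem_sSup_of_directedOn ⟨y, hyc⟩ hchain.directedOn] at hp
      obtain ⟨T, hTc, hpT⟩ := hp
      exact (hcG hTc).2.2 p hpT q hq hz
  obtain ⟨S, hS0S, hSmaximal⟩ := zorn_le_nonempty₀ Good hchainub S0 hS0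
  have hSGood : S ∈ Good := hSmaximal.1
  have hSmax : ∀ S' ∈ Good, S ≤ S' → S' ≤ S := fun S' h1 h2 => hSmaximal.2 h1 h2
  set A : AddSubgroup H := S.map (AddMonoidHom.fst H K) with hA
  -- Claim: A = ⊤.
  have hAtop : A = ⊤ := by
    by_contra hne
    obtain ⟨x0, hx0⟩ : ∃ x0 : H, x0 ∉ A := by
      by_contra hall
      push_neg at hall
      exact hne (by ext z; simpa using hall z)
    set π : H →+ H ⧸ A := QuotientAddGroup.mk' A with hπ
    have hπ0 : ∀ z : H, π z = 0 ↔ z ∈ A := fun z => QuotientAddGroup.eq_zero_iff z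
    have hQm : ∀ ζ : H ⧸ A, m • ζ = 0 := by
      intro ζ
      obtain ⟨z, rfl⟩ := QuotientAddGroup.mk'_surjective A ζ
      rw [← map_nsmul, hπ0]
      exact ⟨(m • z, 0), hSGood.2.1 z, rfl⟩
    have hexp : AddMonoid.ExponentExists (H ⧸ A) := ⟨m, hm0, hQm⟩
    set n : ℕ := AddMonoid.exponent (H ⧸ A) with hn
    have hn0 : 0 < n := hexp.exponent_pos
    obtain ⟨ξ, hξ⟩ := AddMonoid.exists_addOrderOf_eq_exponent hexp
    have hn1 : n ≠ 1 := by
      intro h1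
      apply hx0
      rw [← hπ0]
      have h2 := AddMonoid.exponent_nsmul_eq_zero (π x0)
      rwa [← hn, h1, one_smul] at h2
    obtain ⟨x, hx⟩ : ∃ x : H, π x = ξ := QuotientAddGroup.mk'_surjective A ξ
    have hξn : addOrderOf (π x) = n := by rw [hx, hξ, ← hn]
    have hξ0 : π x ≠ 0 := by
      intro h0
      rw [h0, addOrderOf_zero] at hξn
      exact hn1 hξn.symm
    have hxA : x ∉ A := fun hxA => hξ0 ((hπ0 x).mpr hxA)
    have hnx : n • x ∈ A := by
      rw [← hπ0, map_nsmul, ← hξn]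
      exact addOrderOf_nsmul_eq_zero _
    obtain ⟨p0, hp0S, hp01⟩ := hnx
    obtain ⟨y, hy⟩ : ∃ y : K, n • y = p0.2 :=
      hSGood.2.2 p0 hp0S n hn0 ⟨x, hp01.symm⟩
    -- the element to adjoin
    set S' : AddSubgroup (H × K) := S ⊔ AddSubgroup.closure {(x, y)} with hS'def
    have hxyS' : (x, y) ∈ S' :=
      AddSubgroup.mem_sup_right (AddSubgroup.subset_closure rfl)
    have hS'Good : S' ∈ Good := by
      refine ⟨fun a => AddSubgroup.mem_sup_left (hSGood.1 a),
        fun z => AddSubgroup.mem_sup_left (hSGood.2.1 z), ?_⟩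
      intro p' hp' q hq hz
      rw [hS'def, AddSubgroup.mem_sup] at hp'
      obtain ⟨p, hpS, r, hr, rfl⟩ := hp'
      rw [AddSubgroup.mem_closure_singleton] at hr
      obtain ⟨t, rfl⟩ := hr
      obtain ⟨z, hz⟩ := hz
      have hz1 : q • z = p.1 + t • x := hz
      -- key divisibility: gcd q n ∣ t
      set gq : ℕ := Nat.gcd q n with hgq
      have hgq0 : 0 < gq := Nat.gcd_pos_of_pos_right q hn0
      obtain ⟨n₁, hn₁⟩ : gq ∣ n := Nat.gcd_dvd_right q n
      obtain ⟨q₁, hq₁⟩ : gq ∣ q := Nat.gcd_dvd_left q n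
      have hn₁0 : (n₁ : ℤ) ≠ 0 := by
        simp only [ne_eq, Int.natCast_eq_zero]
        rintro rfl
        rw [mul_zero] at hn₁
        omega
      have hp1A : p.1 ∈ A := ⟨p, hpS, rfl⟩
      have hxz : t • π x = (q : ℤ) • π z := by
        have h1 := congrArg π hz1
        rw [map_nsmul, map_add, map_zsmul, (hπ0 p.1).mpr hp1A, zero_add] at h1
        rw [← h1, natCast_zsmul]
      have hxzZ : t • π x = ((gq : ℤ) * q₁) • π z := by
        rw [hxz]
        congr 1
        exact_mod_cast congrArg (Nat.cast : ℕ → ℤ) hq₁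
      have hnzZ : ((gq : ℤ) * n₁) • π z = 0 := by
        have h4 : ((n : ℕ) : ℤ) • π z = 0 := by
          rw [natCast_zsmul, hn]
          exact AddMonoid.exponent_nsmul_eq_zero _
        rw [← h4]
        congr 1
        exact_mod_cast (congrArg (Nat.cast : ℕ → ℤ) hn₁).symm
      have hkey : (t * n₁) • π x = 0 := by
        linear_combination (norm := module) n₁ • hxzZ + q₁ • hnzZ
      have hdvd : (gq : ℤ) ∣ t := by
        have horder : ((n : ℕ) : ℤ) ∣ t * n₁ := by
          rw [← hξn]
          rw [addOrderOf_dvd_iff_zsmul_eq_zero]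
          exact hkey
        have h5 : ((gq : ℤ) * n₁) ∣ t * n₁ := by
          rw [show ((gq : ℤ) * n₁) = (n : ℤ) by exact_mod_cast (congrArg (Nat.cast : ℕ → ℤ) hn₁).symm]
          exact horder
        exact (mul_dvd_mul_iff_right hn₁0).mp h5
      obtain ⟨t₁, rfl⟩ := hdvd
      set α : ℤ := Nat.gcdA q n with hα
      set β : ℤ := Nat.gcdB q n with hβ
      have hbez : (gq : ℤ) = q * α + n * β := Nat.gcd_eq_gcd_ab q n
      have hbezx : (gq : ℤ) • x = ((q : ℤ) * α + (n : ℤ) * β) • x := by rw [hbez]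
      have hbezy : (gq : ℤ) • y = ((q : ℤ) * α + (n : ℤ) * β) • y := by rw [hbez]
      -- the auxiliary element of S
      set p₂ : H × K := p + (β * t₁) • (n • x, p0.2) with hp₂
      have hp₂S : p₂ ∈ S := by
        refine S.add_mem hpS (AddSubgroup.zsmul_mem _ ?_ _)
        have h6 : ((n • x, p0.2) : H × K) = p0 := by
          ext
          · exact hp01.symm
          · rfl
        rw [h6]; exact hp0S
      have hz1Z : (q : ℤ) • z = p.1 + ((gq : ℤ) * t₁) • x := by
        rw [natCast_zsmul]; exact hz1
      have hp₂1 : ∃ z' : H, q • z' = p₂.1 := by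
        refine ⟨z - (α * t₁) • x, ?_⟩
        have h7 : p₂.1 = p.1 + (β * t₁) • ((n : ℕ) • x) := rfl
        rw [h7, ← natCast_zsmul (z - (α * t₁) • x) q]
        linear_combination (norm := module) hz1Z + t₁ • hbezx
      obtain ⟨w₁, hw₁⟩ := hSGood.2.2 p₂ hp₂S q hq hp₂1
      have hw₁Z : (q : ℤ) • w₁ = p.2 + (β * t₁) • p0.2 :=
        calc (q : ℤ) • w₁ = q • w₁ := natCast_zsmul w₁ q
          _ = p₂.2 := hw₁
          _ = p.2 + (β * t₁) • p0.2 := rfl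
      -- now produce the witness for p + (gq * t₁) • (x, y)
      refine ⟨w₁ + (α * t₁) • y, ?_⟩
      have h8 : (p + ((gq : ℤ) * t₁) • (x, y)).2 = p.2 + ((gq : ℤ) * t₁) • y := rfl
      rw [h8, ← natCast_zsmul (w₁ + (α * t₁) • y) q]
      linear_combination (norm := module) hw₁Z - t₁ • hbezy - (β * t₁) • hy
    -- contradiction with maximality
    have hmem : (x, y) ∈ S := hSmax S' hS'Good le_sup_left hxyS'
    exact hxA ⟨(x, y), hmem, rfl⟩
  -- extract the homomorphism
  set e : S →+ H := (AddMonoidHom.fst H K).comp S.subtype with he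
  have hinj : Function.Injective e := by
    intro s₁ s₂ hs
    have h1 : ((s₁ : H × K).1 : H) = (s₂ : H × K).1 := hs
    have hmem : ((s₁ : H × K) - (s₂ : H × K)) ∈ S := S.sub_mem s₁.2 s₂.2
    have hfst : ((s₁ : H × K) - (s₂ : H × K)).1 = 0 := by
      have : ((s₁ : H × K) - (s₂ : H × K)).1 = (s₁ : H × K).1 - (s₂ : H × K).1 := rfl
      rw [this, h1, sub_self]
    obtain ⟨w, hw⟩ := hSGood.2.2 _ hmem m hm0 ⟨0, by rw [smul_zero, hfst]⟩
    have hsnd : ((s₁ : H × K) - (s₂ : H × K)).2 = 0 := by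
      rw [← hw, hmK]
    have hall : ((s₁ : H × K) : H × K) = (s₂ : H × K) :=
      sub_eq_zero.mp (Prod.ext hfst hsnd)
    exact Subtype.ext hall
  have hsurj : Function.Surjective e := by
    intro z
    have hz : z ∈ A := hAtop ▸ AddSubgroup.mem_top z
    obtain ⟨p, hpS, hp1⟩ := hz
    exact ⟨⟨p, hpS⟩, hp1⟩
  set E : S ≃+ H := AddEquiv.ofBijective e ⟨hinj, hsurj⟩ with hE
  refine ⟨(AddMonoidHom.snd H K).comp (S.subtype.comp E.symm.toAddMonoidHom), ?_⟩
  intro a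
  have hmem : ((a : H), g a) ∈ S := hSGood.1 a
  have hsymm : E.symm (a : H) = ⟨((a : H), g a), hmem⟩ := by
    rw [AddEquiv.symm_apply_eq]
    rfl
  simp only [AddMonoidHom.comp_apply, AddEquiv.toAddMonoidHom_eq_coe,
    AddMonoidHom.coe_coe]
  rw [hsymm]
  rfl
end
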